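/- arXiv:2512.09113 — 6 statements merged into one kernel-verified Lean document; each statement's English description precedes it below -/
import Mathlib

section
/- For every k ∈ (0,1) there exists a constant c > 0 (depending only on k and L) such that ‖∇V(u,y)‖² ≤ c V(u,y) for all (u,y) ∈ ℝⁿ × ℝⁿ, where ∇V denotes the gradient of V on ℝⁿ × ℝⁿ. -/
/-!
Write `z = y - ∇φ(u)`. The derivative of `V` at `(u, y)` is
`(a, b) ↦ (1 - k)⟪∇φ(u), a⟫ + k⟪z, b - D(∇φ)(u) a⟫`, and `‖D(∇φ)‖ ≤ L`, so
`‖∇V‖ ≤ (1 - k)‖∇φ(u)‖ + k(1 + L)‖z‖`. The descent lemma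
`φ(v) ≤ φ(u) + ⟪∇φ(u), v - u⟫ + (L/2)‖v - u‖²` at `v = u - ∇φ(u)/L`, combined with the
minimality of `u⋆`, gives `‖∇φ(u)‖² ≤ 2L(φ(u) - φ(u⋆))`. Squaring the first bound then yields
`‖∇V‖² ≤ 4(1 + L)² V`.
-/

open scoped RealInnerProductSpace

noncomputable section

/-- ℝⁿ as a Euclidean space. -/
abbrev En (n : ℕ) := EuclideanSpace ℝ (Fin n)

/-- ℝⁿ × ℝⁿ with the Euclidean (L²) product structure. -/
abbrev Hn (n : ℕ) := WithLp 2 (En n × En n)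

/-- The Lyapunov function `V(u,y) = (1−k)(φ(u) − φ(u⋆)) + (k/2)‖y − ∇φ(u)‖²`,
viewed as a function on ℝⁿ × ℝⁿ. -/
noncomputable def V {n : ℕ} (φ : En n → ℝ) (ustar : En n) (k : ℝ) (p : Hn n) : ℝ :=
  (1 - k) * (φ p.ofLp.1 - φ ustar) + (k / 2) * ‖p.ofLp.2 - gradient φ p.ofLp.1‖ ^ 2

open scoped NNReal

namespace WithLp

variable {𝕜 α β : Type*} [NontriviallyNormedField 𝕜] [SeminormedAddCommGroup α]
  [SeminormedAddCommGroup β] [NormedSpace 𝕜 α] [NormedSpace 𝕜 β] (p : ENNReal) [Fact (1 ≤ p)]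

theorem norm_fstL_le : ‖fstL p 𝕜 α β‖ ≤ 1 :=
  ContinuousLinearMap.opNorm_le_bound _ zero_le_one fun x => by simpa using norm_fst_le α x

theorem norm_sndL_le : ‖sndL p 𝕜 α β‖ ≤ 1 :=
  ContinuousLinearMap.opNorm_le_bound _ zero_le_one fun x => by simpa using norm_snd_le α x

end WithLp

section Gradient

variable {E : Type*} [NormedAddCommGroup E] [InnerProductSpace ℝ E] [CompleteSpace E]
  {f : E → ℝ} {K : ℝ≥0}

theorem ContDiff.contDiff_gradient {m : WithTop ℕ∞} (hf : ContDiff ℝ (m + 1) f) :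
    ContDiff ℝ m (gradient f) := by
  show ContDiff ℝ m ((InnerProductSpace.toDual ℝ E).symm ∘ fderiv ℝ f)
  exact (InnerProductSpace.toDual ℝ E).symm.contDiff.comp (hf.fderiv_right le_rfl)

theorem Differentiable.le_add_inner_gradient_add_sq (hf : Differentiable ℝ f)
    (hlip : LipschitzWith K (gradient f)) (x y : E) :
    f y ≤ f x + ⟪gradient f x, y - x⟫ + K / 2 * ‖y - x‖ ^ 2 := by
  set d := y - x
  let h : ℝ → ℝ := fun t => f (x + t • d) - t * ⟪gradient f x, d⟫ - K / 2 * t ^ 2 * ‖d‖ ^ 2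
  have hderiv : ∀ t, HasDerivAt h
      (⟪gradient f (x + t • d) - gradient f x, d⟫ - K * t * ‖d‖ ^ 2) t := by
    intro t
    have hline : HasDerivAt (fun s : ℝ => x + s • d) d t := by
      simpa using ((hasDerivAt_id t).smul_const d).const_add x
    refine ((((hf _).hasGradientAt.hasFDerivAt.comp_hasDerivAt t hline).sub
      ((hasDerivAt_id t).mul_const ⟪gradient f x, d⟫)).sub
      (((hasDerivAt_pow 2 t).const_mul (K / 2 : ℝ)).mul_const (‖d‖ ^ 2))).congr_deriv ?_
    simp only [InnerProductSpace.toDual_apply_apply, inner_sub_left]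
    ring
  have hderiv_nonpos : ∀ t, 0 ≤ t →
      ⟪gradient f (x + t • d) - gradient f x, d⟫ - K * t * ‖d‖ ^ 2 ≤ 0 := by
    intro t ht
    have hlip_t := hlip.norm_sub_le (x + t • d) x
    rw [add_sub_cancel_left, norm_smul, Real.norm_of_nonneg ht] at hlip_t
    calc ⟪gradient f (x + t • d) - gradient f x, d⟫ - K * t * ‖d‖ ^ 2
        ≤ ‖gradient f (x + t • d) - gradient f x‖ * ‖d‖ - K * t * ‖d‖ ^ 2 := by
          gcongr; exact real_inner_le_norm _ _
      _ ≤ K * (t * ‖d‖) * ‖d‖ - K * t * ‖d‖ ^ 2 := by gcongr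
      _ = 0 := by ring
  have hanti : AntitoneOn h (Set.Ici 0) := by
    have hdiff : Differentiable ℝ h := fun t => (hderiv t).differentiableAt
    refine antitoneOn_of_deriv_nonpos (convex_Ici 0) hdiff.continuous.continuousOn
      hdiff.differentiableOn fun t ht => ?_
    rw [interior_Ici] at ht
    exact (hderiv t).deriv ▸ hderiv_nonpos t (le_of_lt ht)
  have hend : h 1 ≤ h 0 := hanti Set.self_mem_Ici (Set.mem_Ici.2 zero_le_one) zero_le_one
  simp only [h, zero_smul, add_zero, one_smul, zero_mul, one_pow, mul_one, sub_zero, d,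
    add_sub_cancel] at hend
  linarith

theorem Differentiable.sq_norm_gradient_le_of_forall_le (hf : Differentiable ℝ f)
    (hlip : LipschitzWith K (gradient f)) {x₀ : E} (hmin : ∀ y, f x₀ ≤ f y) (x : E) :
    ‖gradient f x‖ ^ 2 ≤ 2 * K * (f x - f x₀) := by
  have hdescent : ∀ t : ℝ,
      t * ‖gradient f x‖ ^ 2 - K / 2 * t ^ 2 * ‖gradient f x‖ ^ 2 ≤ f x - f x₀ := by
    intro t
    have := hf.le_add_inner_gradient_add_sq hlip x (x - t • gradient f x)
    simp only [sub_sub_cancel_left, inner_neg_right, inner_smul_right, norm_neg, norm_smul,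
      real_inner_self_eq_norm_sq, Real.norm_eq_abs, mul_pow, sq_abs] at this
    linarith [hmin (x - t • gradient f x)]
  rcases eq_zero_or_pos K with rfl | hK
  · rw [NNReal.coe_zero, mul_zero, zero_mul]
    by_contra! hpos
    have := hdescent ((f x - f x₀ + 1) / ‖gradient f x‖ ^ 2)
    rw [NNReal.coe_zero, div_mul_cancel₀ _ hpos.ne'] at this
    linarith
  · have hK : (0 : ℝ) < K := hK
    have hquot : ‖gradient f x‖ ^ 2 / (2 * K) ≤ f x - f x₀ := by
      convert hdescent (1 / K) using 1
      field_simp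
      ring
    linarith [(div_le_iff₀ (by positivity)).mp hquot]

end Gradient

section Lyapunov

variable {n : ℕ} {φ : En n → ℝ} {ustar : En n} {k : ℝ}

open InnerProductSpace WithLp in
theorem hasFDerivAt_V (hφ : ContDiff ℝ 2 φ) (p : Hn n) :
    HasFDerivAt (V φ ustar k)
      ((1 - k) • (toDual ℝ (En n) (gradient φ p.ofLp.1)).comp (fstL 2 ℝ (En n) (En n)) +
        k • (innerSL ℝ (p.ofLp.2 - gradient φ p.ofLp.1)).comp
          (sndL 2 ℝ (En n) (En n) - (fderiv ℝ (gradient φ) p.ofLp.1).comp (fstL 2 ℝ (En n) (En n))))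
      p := by
  have hfst := ((hφ.differentiable two_ne_zero) p.ofLp.1).hasGradientAt.hasFDerivAt.comp p
    (fstL 2 ℝ (En n) (En n)).hasFDerivAt
  have hres : HasFDerivAt (fun q : Hn n => q.ofLp.2 - gradient φ q.ofLp.1)
      (sndL 2 ℝ (En n) (En n) - (fderiv ℝ (gradient φ) p.ofLp.1).comp (fstL 2 ℝ (En n) (En n)))
      p :=
    (sndL 2 ℝ (En n) (En n)).hasFDerivAt.sub <|
      ((hφ.contDiff_gradient (m := 1)).differentiable one_ne_zero _).hasFDerivAt.comp p
        (fstL 2 ℝ (En n) (En n)).hasFDerivAt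
  refine (((hfst.sub_const (φ ustar)).const_mul (1 - k)).add
    (hres.norm_sq.const_mul (k / 2))).congr_fderiv ?_
  rw [two_smul, smul_add, ← add_smul, add_halves]

open InnerProductSpace WithLp in
theorem norm_gradient_V_le {K : ℝ≥0} (hφ : ContDiff ℝ 2 φ) (hlip : LipschitzWith K (gradient φ))
    (hk₀ : 0 ≤ k) (hk₁ : k ≤ 1) (p : Hn n) :
    ‖gradient (V φ ustar k) p‖ ≤
      (1 - k) * ‖gradient φ p.ofLp.1‖ + k * (1 + K) * ‖p.ofLp.2 - gradient φ p.ofLp.1‖ := by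
  have hres : ‖sndL 2 ℝ (En n) (En n) -
      (fderiv ℝ (gradient φ) p.ofLp.1).comp (fstL 2 ℝ (En n) (En n))‖ ≤ 1 + K :=
    calc _ ≤ ‖sndL 2 ℝ (En n) (En n)‖ +
          ‖fderiv ℝ (gradient φ) p.ofLp.1‖ * ‖fstL 2 ℝ (En n) (En n)‖ :=
          (norm_sub_le _ _).trans (add_le_add le_rfl (ContinuousLinearMap.opNorm_comp_le _ _))
      _ ≤ 1 + K * 1 := by
          gcongr
          exacts [norm_sndL_le 2, norm_fderiv_le_of_lipschitz ℝ hlip, norm_fstL_le 2]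
      _ = 1 + K := by rw [mul_one]
  rw [(hasFDerivAt_V hφ p).hasGradientAt.gradient, LinearIsometryEquiv.norm_map]
  calc _ ≤ (1 - k) * (‖gradient φ p.ofLp.1‖ * 1) +
        k * (‖p.ofLp.2 - gradient φ p.ofLp.1‖ * (1 + K)) := by
        refine (norm_add_le _ _).trans (add_le_add ?_ ?_) <;>
          rw [norm_smul, Real.norm_of_nonneg (by linarith)] <;> gcongr <;>
          refine (ContinuousLinearMap.opNorm_comp_le _ _).trans ?_
        · rw [LinearIsometryEquiv.norm_map]; gcongr; exact norm_fstL_le 2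
        · rw [innerSL_apply_norm]; gcongr
    _ = _ := by ring

end Lyapunov

theorem stmt1_general (n : ℕ) (L : ℝ)
    (φ : En n → ℝ) (hφ : ContDiff ℝ 2 φ)
    (hlip : LipschitzWith L.toNNReal (gradient φ))
    (ustar : En n) (hmin : ∀ u, φ ustar ≤ φ u)
    (k : ℝ) (hk : k ∈ Set.Ioo (0 : ℝ) 1) :
    ∃ c > (0 : ℝ), ∀ p : Hn n,
      ‖gradient (V φ ustar k) p‖ ^ 2 ≤ c * V φ ustar k p := by
  obtain ⟨hk₀, hk₁⟩ := hk
  set K := L.toNNReal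
  refine ⟨4 * (1 + K) ^ 2, by positivity, fun p => ?_⟩
  have hV := norm_gradient_V_le (ustar := ustar) hφ hlip hk₀.le hk₁.le p
  have hgrad_sq :=
    (hφ.differentiable two_ne_zero).sq_norm_gradient_le_of_forall_le hlip hmin p.ofLp.1
  set a := ‖gradient φ p.ofLp.1‖
  set r := ‖p.ofLp.2 - gradient φ p.ofLp.1‖
  set D := φ p.ofLp.1 - φ ustar
  have hD : 0 ≤ D := sub_nonneg.2 (hmin _)
  calc ‖gradient (V φ ustar k) p‖ ^ 2 ≤ ((1 - k) * a + k * (1 + K) * r) ^ 2 :=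
        pow_le_pow_left₀ (norm_nonneg _) hV 2
    _ ≤ 2 * ((1 - k) ^ 2 * a ^ 2 + k ^ 2 * (1 + K) ^ 2 * r ^ 2) :=
        add_sq_le.trans_eq (by ring)
    _ ≤ 4 * (1 + K) ^ 2 * ((1 - k) * D + k / 2 * r ^ 2) := by
        have h1 : (1 - k) * a ^ 2 ≤ 2 * (1 + K) ^ 2 * D :=
          calc (1 - k) * a ^ 2 ≤ a ^ 2 := mul_le_of_le_one_left (sq_nonneg _) (by linarith)
            _ ≤ 2 * K * D := hgrad_sq
            _ ≤ 2 * (1 + K) ^ 2 * D := by gcongr; nlinarith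
        have h2 : k ^ 2 ≤ k := by nlinarith
        linarith [mul_le_mul_of_nonneg_left h1 (sub_nonneg.2 hk₁.le),
          mul_le_mul_of_nonneg_right h2 (by positivity : 0 ≤ (1 + (K : ℝ)) ^ 2 * r ^ 2)]

/-- for every `k ∈ (0,1)` there exists `c > 0` such that
`‖∇V(u,y)‖² ≤ c V(u,y)` for all `(u,y) ∈ ℝⁿ × ℝⁿ`. -/
theorem stmt1 (n : ℕ) (hn : 1 ≤ n) (μ L : ℝ) (hμ : 0 < μ) (hL : 0 < L)
    (φ : En n → ℝ) (hφ : ContDiff ℝ 2 φ)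
    (hconv : StrongConvexOn Set.univ μ φ)
    (hlip : LipschitzWith L.toNNReal (gradient φ))
    (ustar : En n) (hmin : ∀ u, φ ustar ≤ φ u)
    (huniq : ∀ u, φ u = φ ustar → u = ustar)
    (hgrad0 : gradient φ ustar = 0)
    (k : ℝ) (hk : k ∈ Set.Ioo (0 : ℝ) 1) :
    ∃ c > (0 : ℝ), ∀ p : Hn n,
      ‖gradient (V φ ustar k) p‖ ^ 2 ≤ c * V φ ustar k p :=
  stmt1_general n L φ hφ hlip ustar hmin k hk

end
end

section
/- There exists k* ∈ (0,1), depending only on μ and L, such that for every k ∈ (0,k*) there exist constants β₁, β₂ > 0 satisfying ⟨∇V(u,y), f((u,y),(e_u,e_y))⟩ ≤ −β₁ V(u,y) + β₂² ‖(e_u,e_y)‖² for all (u,y) ∈ ℝⁿ × ℝⁿ and all (e_u,e_y) ∈ ℝⁿ × ℝⁿ. -/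
/-!
Write `g = ∇φ(u)` and `r = y − ∇φ(u)`. Along `f`, the derivative of `V` is
`−k(1−k)⟨g, y − e_y⟩ + k⟨r, ∇φ(u − e_u) − ∇φ(u)⟩ − k‖r‖² + k²⟨r, D∇φ(u)(y − e_y)⟩`.
Since `y − e_y = r + g − e_y` and `‖D∇φ‖ ≤ L`, Cauchy–Schwarz bounds this, once `k(L+1) ≤ 1/4`,
by `−(k/16)(‖g‖² + ‖r‖²) + 2(L+1)²‖e‖²`. Strong convexity gives the Polyak–Łojasiewicz inequality
`φ(u) − φ(u⋆) ≤ ‖g‖²/(2μ)`, so `V ≤ (1/(2μ) + 1/2)(‖g‖² + ‖r‖²)` and the decay of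
`‖g‖² + ‖r‖²` is a decay of `V`.
-/

open scoped RealInnerProductSpace

noncomputable section

/-- The flow map `f((u,y),(e_u,e_y)) = (−k(y − e_y), ∇φ(u − e_u) − y)`. -/
noncomputable def fmap {n : ℕ} (φ : En n → ℝ) (k : ℝ) (x e : Hn n) : Hn n :=
  (WithLp.equiv 2 (En n × En n)).symm
    ((-k) • (x.ofLp.2 - e.ofLp.2), gradient φ (x.ofLp.1 - e.ofLp.1) - x.ofLp.2)

open Set
open scoped Gradient NNReal

section HilbertSpace

variable {F : Type*} [NormedAddCommGroup F] [InnerProductSpace ℝ F] [CompleteSpace F]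
  {f : F → ℝ} {m : ℝ}

theorem StrongConvexOn.inner_gradient_add_le (hf : StrongConvexOn univ m f) {u : F}
    (hu : DifferentiableAt ℝ f u) (v : F) :
    ⟪∇ f u, v - u⟫ + m / 2 * ‖v - u‖ ^ 2 ≤ f v - f u := by
  set d := v - u
  set c := m / 2 * ‖d‖ ^ 2
  -- strong convexity along `t ↦ u + t • d` says `h ≤ 0 = h 0` on `[0, 1]`, so `h' 0 ≤ 0`
  set h : ℝ → ℝ := fun t => f (u + t • d) - (f u + t * (f v - f u - c) + t ^ 2 * c)
  have hmax : IsMaxOn h (Icc 0 1) 0 := by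
    refine isMaxOn_iff.2 fun t ht => ?_
    have h0 : h 0 = 0 := by simp [h]
    have hconv : f ((1 - t) • u + t • v) ≤ (1 - t) * f u + t * f v - (1 - t) * t * c := by
      simpa [c, d, norm_sub_rev u v] using
        hf.2 (mem_univ u) (mem_univ v) (sub_nonneg.2 ht.2) ht.1 (by ring)
    have hseg : (1 - t) • u + t • v = u + t • d := by module
    rw [hseg] at hconv
    rw [h0]
    simp only [h]
    linarith
  have hderiv : HasDerivAt h (⟪∇ f u, d⟫ - (f v - f u - c)) 0 := by
    have hline : HasDerivAt (fun t : ℝ => u + t • d) d 0 := by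
      simpa using ((hasDerivAt_id (0 : ℝ)).smul_const d).const_add u
    have hfu : HasFDerivAt f (fderiv ℝ f u) (u + (0 : ℝ) • d) := by simpa using hu.hasFDerivAt
    have hpoly :
        HasDerivAt (fun t : ℝ => f u + t * (f v - f u - c) + t ^ 2 * c) (f v - f u - c) 0 := by
      simpa using (((hasDerivAt_id (0 : ℝ)).mul_const (f v - f u - c)).const_add (f u)).fun_add
        ((hasDerivAt_pow 2 (0 : ℝ)).mul_const c)
    rw [inner_gradient_left]
    exact (hfu.comp_hasDerivAt 0 hline).sub hpoly
  have hcone : (1 : ℝ) ∈ posTangentConeAt (Icc 0 1) 0 :=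
    mem_posTangentConeAt_of_segment_subset (by simp [segment_eq_Icc])
  have := hmax.localize.hasFDerivWithinAt_nonpos hderiv.hasFDerivAt.hasFDerivWithinAt hcone
  simp only [ContinuousLinearMap.toSpanSingleton_apply, one_smul] at this
  linarith

theorem StrongConvexOn.mul_sub_le_norm_gradient_sq (hf : StrongConvexOn univ m f) (hm : 0 ≤ m)
    {u : F} (hu : DifferentiableAt ℝ f u) (v : F) :
    2 * m * (f u - f v) ≤ ‖∇ f u‖ ^ 2 := by
  have hfo := hf.inner_gradient_add_le hu v
  have hcs : -⟪∇ f u, v - u⟫ ≤ ‖∇ f u‖ * ‖v - u‖ := by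
    rw [← inner_neg_right, ← norm_neg (v - u)]
    exact real_inner_le_norm _ _
  nlinarith [sq_nonneg (m * ‖v - u‖ - ‖∇ f u‖), mul_le_mul_of_nonneg_left hcs hm]

theorem ContDiff.differentiable_gradient {φ : F → ℝ} (hφ : ContDiff ℝ 2 φ) :
    Differentiable ℝ (∇ φ) :=
  (InnerProductSpace.toDual ℝ F).symm.toContinuousLinearEquiv.differentiable.comp
    ((hφ.fderiv_right (m := 1) (by norm_num)).differentiable one_ne_zero)

theorem inner_gradient_lyapunov {φ : F → ℝ} {c k : ℝ} {x : WithLp 2 (F × F)}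
    (hφ : DifferentiableAt ℝ φ x.ofLp.1) (hg : DifferentiableAt ℝ (∇ φ) x.ofLp.1)
    (w : WithLp 2 (F × F)) :
    ⟪∇ (fun p : WithLp 2 (F × F) =>
        (1 - k) * (φ p.ofLp.1 - c) + (k / 2) * ‖p.ofLp.2 - ∇ φ p.ofLp.1‖ ^ 2) x, w⟫ =
      (1 - k) * ⟪∇ φ x.ofLp.1, w.ofLp.1⟫ +
        k * ⟪x.ofLp.2 - ∇ φ x.ofLp.1, w.ofLp.2 - fderiv ℝ (∇ φ) x.ofLp.1 w.ofLp.1⟫ := by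
  set fst := WithLp.fstL 2 ℝ F F
  set snd := WithLp.sndL 2 ℝ F F
  set H := fderiv ℝ (∇ φ) x.ofLp.1
  have hr : HasFDerivAt (fun p : WithLp 2 (F × F) => p.ofLp.2 - ∇ φ p.ofLp.1)
      (snd - H.comp fst) x :=
    snd.hasFDerivAt.sub (by exact hg.hasFDerivAt.comp x fst.hasFDerivAt)
  have hV : HasFDerivAt (fun p : WithLp 2 (F × F) =>
      (1 - k) * (φ p.ofLp.1 - c) + (k / 2) * ‖p.ofLp.2 - ∇ φ p.ofLp.1‖ ^ 2) _ x :=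
    (((hφ.hasFDerivAt.comp x fst.hasFDerivAt).sub_const c).const_mul (1 - k)).add
        (hr.norm_sq.const_mul (k / 2))
  rw [inner_gradient_left, hV.fderiv]
  simp only [add_apply, smul_apply, sub_apply, ContinuousLinearMap.comp_apply, fst, snd,
    WithLp.fstL_apply, WithLp.sndL_apply, WithLp.ofLp_fst, WithLp.ofLp_snd, coe_innerSL_apply,
    ← inner_gradient_left, smul_eq_mul, nsmul_eq_mul]
  ring

end HilbertSpace

theorem lyapunov_poly_bound {k K G R E : ℝ} (hk : 0 ≤ k) (hK : 0 ≤ K) (hkK : k * (K + 1) ≤ 1 / 4)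
    (hG : 0 ≤ G) (hR : 0 ≤ R) (hE : 0 ≤ E) :
    -(k * (1 - k)) * (G ^ 2 - G * R - G * E) + k * (R * (K * E)) - k * R ^ 2 +
        k ^ 2 * (R * (K * (R + G + E))) ≤
      -(k / 16) * (G ^ 2 + R ^ 2) + 2 * (K + 1) ^ 2 * E ^ 2 := by
  have hk4 : k ≤ 1 / 4 := by nlinarith
  have hquad : -(1 - k) * G ^ 2 + ((1 - k) + k * K) * (G * R) - (1 - k * K) * R ^ 2 ≤
      -(G ^ 2 + R ^ 2) / 8 := by
    nlinarith [sq_nonneg (G - R), mul_nonneg hG hR, mul_nonneg (mul_nonneg hk hG) hG,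
      mul_nonneg (mul_nonneg hk hR) hR, mul_nonneg (mul_nonneg hk hG) hR,
      mul_nonneg (mul_nonneg (mul_nonneg hk hK) hG) hR,
      mul_nonneg (mul_nonneg (mul_nonneg hk hK) hR) hR]
  have herr : (1 - k) * G + K * (1 + k) * R ≤ (K + 1) * (G + R) := by
    nlinarith [mul_nonneg hk hG, mul_nonneg (mul_nonneg hk hK) hR, mul_nonneg hK hG]
  have hamgm : ∀ X : ℝ, (K + 1) * X * E ≤ X ^ 2 / 16 + 4 * (K + 1) ^ 2 * E ^ 2 := fun X => by
    nlinarith [sq_nonneg (X / 4 - 2 * (K + 1) * E)]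
  have hE2 : 0 ≤ (K + 1) ^ 2 * E ^ 2 := by positivity
  nlinarith [mul_le_mul_of_nonneg_left hquad hk, mul_le_mul_of_nonneg_left herr (mul_nonneg hk hE),
    hamgm G, hamgm R, mul_le_mul_of_nonneg_right hk4 hE2]

section Estimates

variable {n : ℕ} {φ : En n → ℝ} {ustar : En n} {k : ℝ}

theorem inner_gradient_V_fmap_le {K : ℝ≥0} (hφ : ContDiff ℝ 2 φ) (hlip : LipschitzWith K (∇ φ))
    (hk : 0 ≤ k) (hkK : k * (K + 1) ≤ 1 / 4) (x e : Hn n) :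
    ⟪∇ (V φ ustar k) x, fmap φ k x e⟫ ≤
      -(k / 16) * (‖∇ φ x.ofLp.1‖ ^ 2 + ‖x.ofLp.2 - ∇ φ x.ofLp.1‖ ^ 2) +
        2 * (K + 1) ^ 2 * ‖e‖ ^ 2 := by
  unfold V
  rw [inner_gradient_lyapunov (hφ.differentiable two_ne_zero _) (hφ.differentiable_gradient _)]
  set u := x.ofLp.1
  set y := x.ofLp.2
  set g := ∇ φ u
  set r := y - g
  set z := y - e.ofLp.2
  set δ := ∇ φ (u - e.ofLp.1) - g
  set H := fderiv ℝ (∇ φ) u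
  have hf₁ : (fmap φ k x e).ofLp.1 = -k • z := rfl
  have hf₂ : (fmap φ k x e).ofLp.2 = ∇ φ (u - e.ofLp.1) - y := rfl
  have hw : ∇ φ (u - e.ofLp.1) - y - H (-k • z) = δ - r + k • H z := by
    simp only [map_smul, r, δ]
    module
  rw [hf₁, hf₂, hw]
  simp only [inner_smul_right, inner_add_right, inner_sub_right, real_inner_self_eq_norm_sq]
  have he₁ : ‖e.ofLp.1‖ ≤ ‖e‖ := WithLp.norm_fst_le _ e
  have he₂ : ‖e.ofLp.2‖ ≤ ‖e‖ := WithLp.norm_snd_le _ e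
  have hz : z = r + g - e.ofLp.2 := by simp only [r, z]; abel
  have hgz : ‖g‖ ^ 2 - ‖g‖ * ‖r‖ - ‖g‖ * ‖e‖ ≤ ⟪g, z⟫ := by
    rw [hz, inner_sub_right, inner_add_right, real_inner_self_eq_norm_sq]
    nlinarith [neg_le_of_abs_le (abs_real_inner_le_norm g r), real_inner_le_norm g e.ofLp.2,
      mul_le_mul_of_nonneg_left he₂ (norm_nonneg g)]
  have hδ : ‖δ‖ ≤ K * ‖e‖ :=
    calc ‖δ‖ = dist (∇ φ (u - e.ofLp.1)) (∇ φ u) := (dist_eq_norm _ _).symm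
      _ ≤ K * dist (u - e.ofLp.1) u := hlip.dist_le_mul _ _
      _ = K * ‖e.ofLp.1‖ := by rw [dist_eq_norm, sub_sub_cancel_left, norm_neg]
      _ ≤ K * ‖e‖ := by gcongr
  have hHz : ‖H z‖ ≤ K * (‖r‖ + ‖g‖ + ‖e‖) := by
    refine H.le_of_opNorm_le_of_le (norm_fderiv_le_of_lipschitz ℝ hlip) ?_
    rw [hz]
    exact (norm_sub_le _ _).trans (add_le_add (norm_add_le r g) he₂)
  have hrδ : ⟪r, δ⟫ ≤ ‖r‖ * (K * ‖e‖) := (real_inner_le_norm r δ).trans (by gcongr)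
  have hrHz : ⟪r, H z⟫ ≤ ‖r‖ * (K * (‖r‖ + ‖g‖ + ‖e‖)) :=
    (real_inner_le_norm r (H z)).trans (by gcongr)
  have hk' : 0 ≤ k * (1 - k) := mul_nonneg hk (by nlinarith [K.coe_nonneg])
  linarith [lyapunov_poly_bound hk K.coe_nonneg hkK (norm_nonneg g) (norm_nonneg r) (norm_nonneg e),
    mul_le_mul_of_nonneg_left hgz hk', mul_le_mul_of_nonneg_left hrδ hk,
    mul_le_mul_of_nonneg_left hrHz (sq_nonneg k)]

theorem V_le_of_strongConvexOn {μ : ℝ} (hconv : StrongConvexOn univ μ φ) (hμ : 0 < μ)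
    (hφ : Differentiable ℝ φ) (hk₀ : 0 ≤ k) (hk₁ : k ≤ 1) (x : Hn n) :
    V φ ustar k x ≤
      (1 / (2 * μ) + 1 / 2) * (‖∇ φ x.ofLp.1‖ ^ 2 + ‖x.ofLp.2 - ∇ φ x.ofLp.1‖ ^ 2) := by
  set G := ‖∇ φ x.ofLp.1‖
  set P := φ x.ofLp.1 - φ ustar
  have hP : P ≤ G ^ 2 / (2 * μ) := by
    rw [le_div_iff₀ (by positivity)]
    linarith [hconv.mul_sub_le_norm_gradient_sq hμ.le (hφ x.ofLp.1) ustar]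
  have hkP : (1 - k) * P ≤ G ^ 2 / (2 * μ) := by
    rcases le_total 0 P with h | h
    · nlinarith [mul_nonneg hk₀ h]
    · have : 0 ≤ G ^ 2 / (2 * μ) := by positivity
      linarith [mul_nonpos_of_nonneg_of_nonpos (sub_nonneg.2 hk₁) h]
  set R := ‖x.ofLp.2 - ∇ φ x.ofLp.1‖
  have hkR : k / 2 * R ^ 2 ≤ R ^ 2 / 2 := by nlinarith [sq_nonneg R]
  have hrest : 0 ≤ R ^ 2 / (2 * μ) + G ^ 2 / 2 := by positivity
  calc V φ ustar k x = (1 - k) * P + k / 2 * R ^ 2 := rfl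
    _ ≤ G ^ 2 / (2 * μ) + R ^ 2 / 2 := add_le_add hkP hkR
    _ ≤ (1 / (2 * μ) + 1 / 2) * (G ^ 2 + R ^ 2) := by
      rw [show (1 / (2 * μ) + 1 / 2) * (G ^ 2 + R ^ 2) =
        G ^ 2 / (2 * μ) + R ^ 2 / 2 + (R ^ 2 / (2 * μ) + G ^ 2 / 2) by ring]
      linarith

end Estimates

theorem stmt2_general (n : ℕ) (μ L : ℝ) (hμ : 0 < μ)
    (φ : En n → ℝ) (hφ : ContDiff ℝ 2 φ)
    (hconv : StrongConvexOn Set.univ μ φ)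
    (hlip : LipschitzWith L.toNNReal (gradient φ))
    (ustar : En n) :
    ∃ kstar ∈ Set.Ioo (0 : ℝ) 1, ∀ k ∈ Set.Ioo (0 : ℝ) kstar,
      ∃ β₁ > (0 : ℝ), ∃ β₂ > (0 : ℝ), ∀ x e : Hn n,
        ⟪gradient (V φ ustar k) x, fmap φ k x e⟫ ≤ -β₁ * V φ ustar k x + β₂ ^ 2 * ‖e‖ ^ 2 := by
  generalize L.toNNReal = K at hlip
  have hK : (0 : ℝ) ≤ K := K.coe_nonneg
  set C := 1 / (2 * μ) + 1 / 2
  have hC : 0 < C := by positivity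
  refine ⟨1 / (4 * (K + 1)), ⟨by positivity, by rw [div_lt_one (by positivity)]; linarith⟩,
    fun k ⟨hk₀, hk⟩ => ⟨k / (16 * C), by positivity, 2 * (K + 1), by positivity, fun x e => ?_⟩⟩
  have hkK : k * (K + 1) ≤ 1 / 4 := by
    rw [lt_div_iff₀ (by positivity)] at hk
    linarith
  have hV := V_le_of_strongConvexOn (ustar := ustar) hconv hμ (hφ.differentiable two_ne_zero) hk₀.le
    (by nlinarith) x
  have hβ : k / (16 * C) * V φ ustar k x ≤
      k / 16 * (‖∇ φ x.ofLp.1‖ ^ 2 + ‖x.ofLp.2 - ∇ φ x.ofLp.1‖ ^ 2) := by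
    calc _ ≤ k / (16 * C) * (C * (‖∇ φ x.ofLp.1‖ ^ 2 + ‖x.ofLp.2 - ∇ φ x.ofLp.1‖ ^ 2)) := by
          gcongr
      _ = _ := by field_simp
  have hβ₂ : 2 * (K + 1) ^ 2 * ‖e‖ ^ 2 ≤ (2 * (K + 1)) ^ 2 * ‖e‖ ^ 2 := by
    nlinarith [sq_nonneg ((K + 1) * ‖e‖)]
  linarith [inner_gradient_V_fmap_le (ustar := ustar) hφ hlip hk₀.le hkK x e]

/-- there exists `k* ∈ (0,1)` such that for every `k ∈ (0,k*)` there exist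
`β₁, β₂ > 0` with `⟨∇V(u,y), f((u,y),(e_u,e_y))⟩ ≤ −β₁ V(u,y) + β₂² ‖(e_u,e_y)‖²`
for all `(u,y)` and `(e_u,e_y)` in ℝⁿ × ℝⁿ. -/
theorem stmt2 (n : ℕ) (hn : 1 ≤ n) (μ L : ℝ) (hμ : 0 < μ) (hL : 0 < L)
    (φ : En n → ℝ) (hφ : ContDiff ℝ 2 φ)
    (hconv : StrongConvexOn Set.univ μ φ)
    (hlip : LipschitzWith L.toNNReal (gradient φ))
    (ustar : En n) (hmin : ∀ u, φ ustar ≤ φ u)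
    (huniq : ∀ u, φ u = φ ustar → u = ustar)
    (hgrad0 : gradient φ ustar = 0) :
    ∃ kstar ∈ Set.Ioo (0 : ℝ) 1, ∀ k ∈ Set.Ioo (0 : ℝ) kstar,
      ∃ β₁ > (0 : ℝ), ∃ β₂ > (0 : ℝ), ∀ x e : Hn n,
        ⟪gradient (V φ ustar k) x, fmap φ k x e⟫ ≤ -β₁ * V φ ustar k x + β₂ ^ 2 * ‖e‖ ^ 2 :=
  stmt2_general n μ L hμ φ hφ hconv hlip ustar

end
end

section
/- Let v : ℝ → ℝⁿ be continuous and T-periodic (T > 0) with ∫₀ᵀ v(τ) dτ = 0, and set W(t) = ∫₀ᵗ v(s) ds. Then W is T-periodic and bounded, with M := sup_{t∈[0,T]} ‖W(t)‖ < ∞, and for every δ > 0, every b > 0, and every continuously differentiable function g : [0,b] → ℝ, ‖∫₀ᵇ g(s) v(s/δ) ds‖ ≤ δ M (|g(b)| + ∫₀ᵇ |g′(s)| ds). -/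
/-!
Since `v` has zero mean, its primitive `W` is periodic, hence bounded by its supremum `M` over one
period. The function `s ↦ δ • W (s / δ)` is a primitive of `s ↦ v (s / δ)` bounded by `δ M`, and one
integration by parts moves the derivative onto `g`: the boundary term at `0` vanishes, the one at
`b` is at most `δ M |g b|`, and the remaining integral is at most `δ M ∫₀ᵇ |g'|`.
-/

open intervalIntegral MeasureTheory Set Function

noncomputable section

variable {E : Type*}

theorem Function.Periodic.norm_le_sSup_image_Icc [SeminormedAddCommGroup E] {f : ℝ → E} {T : ℝ}
    (hf : Periodic f T) (hT : 0 < T) (hc : Continuous f) (x : ℝ) :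
    ‖f x‖ ≤ sSup ((fun t => ‖f t‖) '' Icc 0 T) := by
  obtain ⟨y, hy, hxy⟩ := hf.exists_mem_Ico₀ hT x
  rw [hxy]
  exact hc.norm.continuousOn.le_sSup_image_Icc (Ico_subset_Icc_self hy)

variable [NormedAddCommGroup E] [NormedSpace ℝ E]

theorem Function.Periodic.periodic_primitive_of_integral_eq_zero {v : ℝ → E} {T : ℝ}
    (hv : Periodic v T) (hint : ∀ a b, IntervalIntegrable v volume a b)
    (hzero : ∫ x in 0..T, v x = 0) :
    Periodic (fun t => ∫ x in 0..t, v x) T := fun t => by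
  simpa [hzero] using hv.intervalIntegral_add_eq_add 0 t hint

theorem hasDerivAt_smul_comp_div {W : ℝ → E} {w : E} {δ s : ℝ} (hδ : δ ≠ 0)
    (hW : HasDerivAt W w (s / δ)) :
    HasDerivAt (fun t => δ • W (t / δ)) w s := by
  have h := (hW.scomp s ((hasDerivAt_id s).div_const δ)).const_smul δ
  rwa [smul_smul, mul_one_div_cancel hδ, one_smul] at h

variable [CompleteSpace E]

theorem norm_integral_smul_le_of_norm_primitive_le {g : ℝ → ℝ} {f F : ℝ → E} {b C : ℝ}
    (hb : 0 < b) (hg : ContDiffOn ℝ 1 g (Icc 0 b))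
    (hF : ∀ s ∈ Icc 0 b, HasDerivWithinAt F (f s) (Icc 0 b) s)
    (hf : IntervalIntegrable f volume 0 b) (hF0 : F 0 = 0) (hFC : ∀ s ∈ Icc 0 b, ‖F s‖ ≤ C) :
    ‖∫ s in 0..b, g s • f s‖ ≤ C * (|g b| + ∫ s in 0..b, |derivWithin g (Icc 0 b) s|) := by
  set g' := derivWithin g (Icc 0 b)
  have hIcc : uIcc 0 b = Icc 0 b := uIcc_of_le hb.le
  have hg'cont : ContinuousOn g' (Icc 0 b) :=
    hg.continuousOn_derivWithin (uniqueDiffOn_Icc hb) le_rfl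
  have hg'int : IntervalIntegrable g' volume 0 b :=
    hg'cont.intervalIntegrable_of_Icc hb.le
  have hgg' : ∀ s ∈ Icc 0 b, HasDerivWithinAt g (g' s) (Icc 0 b) s :=
    fun s hs => (hg.differentiableOn one_ne_zero s hs).hasDerivWithinAt
  rw [integral_smul_deriv_eq_deriv_smul_of_hasDerivWithinAt (hIcc ▸ hgg') (hIcc ▸ hF) hg'int hf,
    hF0, smul_zero, sub_zero]
  have hboundary : ‖g b • F b‖ ≤ C * |g b| := by
    rw [norm_smul, Real.norm_eq_abs, mul_comm]
    exact mul_le_mul_of_nonneg_right (hFC b (right_mem_Icc.2 hb.le)) (abs_nonneg _)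
  have hbulk : ‖∫ s in 0..b, g' s • F s‖ ≤ C * ∫ s in 0..b, |g' s| := by
    rw [← intervalIntegral.integral_const_mul]
    refine norm_integral_le_of_norm_le hb.le (ae_of_all _ fun s hs => ?_)
      (hg'cont.abs.const_smul C |>.intervalIntegrable_of_Icc hb.le)
    rw [norm_smul, Real.norm_eq_abs, mul_comm]
    exact mul_le_mul_of_nonneg_right (hFC s (Ioc_subset_Icc_self hs)) (abs_nonneg _)
  calc ‖g b • F b - ∫ s in 0..b, g' s • F s‖
      ≤ ‖g b • F b‖ + ‖∫ s in 0..b, g' s • F s‖ := norm_sub_le _ _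
    _ ≤ C * (|g b| + ∫ s in 0..b, |g' s|) := by rw [mul_add]; exact add_le_add hboundary hbulk

theorem stmt8_general (n : ℕ) (T : ℝ) (hT : 0 < T)
    (v : ℝ → En n) (hv : Continuous v) (hper : Function.Periodic v T)
    (hzero : (∫ τ in (0 : ℝ)..T, v τ) = 0)
    (W : ℝ → En n) (hW : W = fun t => ∫ s in (0 : ℝ)..t, v s)
    (M : ℝ) (hM : M = sSup ((fun t => ‖W t‖) '' Set.Icc 0 T)) :
    Function.Periodic W T ∧
    Bornology.IsBounded (Set.range W) ∧
    (∀ t ∈ Set.Icc (0 : ℝ) T, ‖W t‖ ≤ M) ∧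
    (∀ δ > (0 : ℝ), ∀ b > (0 : ℝ), ∀ g : ℝ → ℝ, ContDiffOn ℝ 1 g (Set.Icc 0 b) →
      ‖∫ s in (0 : ℝ)..b, g s • v (s / δ)‖ ≤
        δ * M * (|g b| + ∫ s in (0 : ℝ)..b, |derivWithin g (Set.Icc 0 b) s|)) := by
  have hint : ∀ a b, IntervalIntegrable v volume a b := hv.intervalIntegrable
  have hWper : Periodic W T := hW ▸ hper.periodic_primitive_of_integral_eq_zero hint hzero
  have hWcont : Continuous W := hW ▸ continuous_primitive hint 0
  have hWM : ∀ t, ‖W t‖ ≤ M := hM ▸ hWper.norm_le_sSup_image_Icc hT hWcont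
  refine ⟨hWper, hWper.isBounded_of_continuous hT.ne' hWcont, fun t _ => hWM t, ?_⟩
  intro δ hδ b hb g hg
  have hWv : ∀ s, HasDerivAt (fun t => δ • W (t / δ)) (v (s / δ)) s := fun s =>
    hasDerivAt_smul_comp_div hδ.ne' (hW ▸ (hv.integral_hasStrictDerivAt 0 (s / δ)).hasDerivAt)
  refine norm_integral_smul_le_of_norm_primitive_le hb hg (fun s _ => (hWv s).hasDerivWithinAt)
    ((hv.comp (continuous_id.div_const δ)).intervalIntegrable 0 b) (by simp [hW]) fun s _ => ?_
  rw [norm_smul, Real.norm_of_nonneg hδ.le]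
  exact mul_le_mul_of_nonneg_left (hWM _) hδ.le

/-- if `v` is continuous, `T`-periodic with zero mean, then its
antiderivative `W(t) = ∫₀ᵗ v` is `T`-periodic and bounded, and for every `δ > 0`,
`b > 0` and every continuously differentiable `g : [0,b] → ℝ`,
`‖∫₀ᵇ g(s) v(s/δ) ds‖ ≤ δ M (|g(b)| + ∫₀ᵇ |g′(s)| ds)` where
`M = sup_{t ∈ [0,T]} ‖W(t)‖`. -/
theorem stmt8 (n : ℕ) (hn : 1 ≤ n) (T : ℝ) (hT : 0 < T)
    (v : ℝ → En n) (hv : Continuous v) (hper : Function.Periodic v T)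
    (hzero : (∫ τ in (0 : ℝ)..T, v τ) = 0)
    (W : ℝ → En n) (hW : W = fun t => ∫ s in (0 : ℝ)..t, v s)
    (M : ℝ) (hM : M = sSup ((fun t => ‖W t‖) '' Set.Icc 0 T)) :
    Function.Periodic W T ∧
    Bornology.IsBounded (Set.range W) ∧
    (∀ t ∈ Set.Icc (0 : ℝ) T, ‖W t‖ ≤ M) ∧
    (∀ δ > (0 : ℝ), ∀ b > (0 : ℝ), ∀ g : ℝ → ℝ, ContDiffOn ℝ 1 g (Set.Icc 0 b) →
      ‖∫ s in (0 : ℝ)..b, g s • v (s / δ)‖ ≤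
        δ * M * (|g b| + ∫ s in (0 : ℝ)..b, |derivWithin g (Set.Icc 0 b) s|)) :=
  stmt8_general n T hT v hv hper hzero W hW M hM

end
end

section
/- Assume v : ℝ → ℝⁿ is continuous and T-periodic with ∫₀ᵀ v(τ) dτ = 0 and (1/T)∫₀ᵀ v(τ)v(τ)ᵀ dτ = I, and assume φ : ℝⁿ → ℝ is continuously differentiable with L-Lipschitz gradient ∇φ. Then for every a > 0 and every û ∈ ℝⁿ, ‖(1/(aT)) ∫₀ᵀ φ(û + a v(τ)) v(τ) dτ − ∇φ(û)‖ ≤ (aL/(2T)) ∫₀ᵀ ‖v(τ)‖³ dτ. (In particular, the period-average of the classical extremum-seeking estimate a⁻¹ φ(û + a v(τ)) v(τ) equals ∇φ(û) + O(a).) -/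
/-!
Write `φ(û + a v) = φ(û) + a ⟪∇φ(û), v⟫ + R`. Against the dither `v`, the constant term integrates
to zero and the linear term to `a T ∇φ(û)` by the second-moment condition, so the error of the
averaged estimate is `(1/(aT)) ∫₀ᵀ R(τ) v(τ) dτ`. The Lipschitz gradient gives the Taylor bound
`|R| ≤ (L/2) a² ‖v‖²`, whence the cubic moment of `v`.
-/

open scoped RealInnerProductSpace

noncomputable section

open scoped NNReal
open MeasureTheory

variable {E : Type*} [NormedAddCommGroup E] [InnerProductSpace ℝ E]

section Taylor

variable [CompleteSpace E]

theorem HasGradientAt.hasDerivAt_comp_add_smul {f : E → ℝ} {g x d : E} {t : ℝ}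
    (hf : HasGradientAt f g (x + t • d)) :
    HasDerivAt (fun s : ℝ => f (x + s • d)) ⟪g, d⟫ t := by
  have hline : HasDerivAt (fun s : ℝ => x + s • d) d t := by
    simpa using ((hasDerivAt_id t).smul_const d).const_add x
  simpa [Function.comp_def] using hf.hasFDerivAt.comp_hasDerivAt t hline

theorem abs_sub_sub_inner_gradient_le {f : E → ℝ} (hf : Differentiable ℝ f) {K : ℝ≥0}
    (hK : LipschitzWith K (gradient f)) (x y : E) :
    |f y - f x - ⟪gradient f x, y - x⟫| ≤ K / 2 * ‖y - x‖ ^ 2 := by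
  set d := y - x
  have hderiv : ∀ t : ℝ, HasDerivAt (fun s : ℝ => f (x + s • d) - s * ⟪gradient f x, d⟫)
      ⟪gradient f (x + t • d) - gradient f x, d⟫ t := fun t => by
    rw [inner_sub_left]
    exact ((hf _).hasGradientAt.hasDerivAt_comp_add_smul).sub
      ((hasDerivAt_id t).mul_const _ |>.congr_deriv (one_mul _))
  have hcont : Continuous fun t : ℝ => ⟪gradient f (x + t • d) - gradient f x, d⟫ := by
    have := hK.continuous
    fun_prop
  have hftc := intervalIntegral.integral_eq_sub_of_hasDerivAt (a := 0) (b := 1)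
    (fun t _ => hderiv t) (hcont.intervalIntegrable _ _)
  have hbound : ∀ t ∈ Set.Ioc (0 : ℝ) 1,
      ‖⟪gradient f (x + t • d) - gradient f x, d⟫‖ ≤ t * (K * ‖d‖ ^ 2) := fun t ht => calc
    _ ≤ ‖gradient f (x + t • d) - gradient f x‖ * ‖d‖ := norm_inner_le_norm _ _
    _ ≤ K * ‖t • d‖ * ‖d‖ := by
      gcongr
      simpa [dist_eq_norm] using hK.dist_le_mul (x + t • d) x
    _ = t * (K * ‖d‖ ^ 2) := by rw [norm_smul, Real.norm_of_nonneg ht.1.le]; ring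
  calc |f y - f x - ⟪gradient f x, d⟫|
      = ‖∫ t in (0 : ℝ)..1, ⟪gradient f (x + t • d) - gradient f x, d⟫‖ := by
        rw [hftc, Real.norm_eq_abs]
        simp only [one_smul, zero_smul, add_zero, one_mul, zero_mul, sub_zero, d, add_sub_cancel,
          sub_right_comm]
    _ ≤ ∫ t in (0 : ℝ)..1, t * (K * ‖d‖ ^ 2) :=
        intervalIntegral.norm_integral_le_of_norm_le zero_le_one
          (Filter.Eventually.of_forall hbound) ((continuous_mul_const _).intervalIntegrable _ _)
    _ = K / 2 * ‖d‖ ^ 2 := by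
        rw [intervalIntegral.integral_mul_const, integral_id]; ring

theorem norm_integral_taylor_remainder_smul_le {f : E → ℝ} (hf : Differentiable ℝ f) {K : ℝ≥0}
    (hK : LipschitzWith K (gradient f)) {T : ℝ} (hT : 0 ≤ T) {v : ℝ → E} (hv : Continuous v)
    (x : E) (a : ℝ) :
    ‖∫ τ in (0 : ℝ)..T, (f (x + a • v τ) - f x - ⟪v τ, a • gradient f x⟫) • v τ‖ ≤
      a ^ 2 * K / 2 * ∫ τ in (0 : ℝ)..T, ‖v τ‖ ^ 3 := by
  have hremainder : ∀ τ, ‖(f (x + a • v τ) - f x - ⟪v τ, a • gradient f x⟫) • v τ‖ ≤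
      a ^ 2 * K / 2 * ‖v τ‖ ^ 3 := fun τ => by
    have htaylor := abs_sub_sub_inner_gradient_le hf hK x (x + a • v τ)
    rw [add_sub_cancel_left, norm_smul, Real.norm_eq_abs, mul_pow, sq_abs, real_inner_comm]
      at htaylor
    rw [norm_smul, Real.norm_eq_abs, real_inner_smul_right, ← real_inner_smul_left]
    calc _ ≤ K / 2 * (a ^ 2 * ‖v τ‖ ^ 2) * ‖v τ‖ := by gcongr
      _ = a ^ 2 * K / 2 * ‖v τ‖ ^ 3 := by ring
  rw [← intervalIntegral.integral_const_mul]
  exact intervalIntegral.norm_integral_le_of_norm_le hT (Filter.Eventually.of_forall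
    fun τ _ => hremainder τ) ((continuous_const.mul (hv.norm.pow 3)).intervalIntegrable _ _)

end Taylor

section Dither

variable {T : ℝ} {v : ℝ → E}

theorem integral_inner_smul_eq_smul (hT : T ≠ 0)
    (hmoment : ∀ z : E, (1 / T) • (∫ τ in (0 : ℝ)..T, ⟪v τ, z⟫ • v τ) = z) (g : E) :
    ∫ τ in (0 : ℝ)..T, ⟪v τ, g⟫ • v τ = T • g := by
  conv_rhs => rw [← hmoment g, smul_smul, mul_one_div_cancel hT, one_smul]

theorem integral_smul_eq_smul_add_remainder (hT : T ≠ 0) (hv : Continuous v)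
    (hzero : ∫ τ in (0 : ℝ)..T, v τ = 0)
    (hmoment : ∀ z : E, (1 / T) • (∫ τ in (0 : ℝ)..T, ⟪v τ, z⟫ • v τ) = z)
    {ψ : ℝ → ℝ} (hψ : Continuous ψ) (c : ℝ) (g : E) :
    ∫ τ in (0 : ℝ)..T, ψ τ • v τ = T • g + ∫ τ in (0 : ℝ)..T, (ψ τ - c - ⟪v τ, g⟫) • v τ := by
  have hsplit : ∀ τ, ψ τ • v τ = c • v τ + ⟪v τ, g⟫ • v τ + (ψ τ - c - ⟪v τ, g⟫) • v τ :=
    fun τ => by rw [← add_smul, ← add_smul]; ring_nf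
  have hint : ∀ w : ℝ → ℝ, Continuous w → IntervalIntegrable (fun τ => w τ • v τ) volume 0 T :=
    fun w hw => (hw.smul hv).intervalIntegrable _ _
  have hconst := hint _ (continuous_const (y := c))
  have hinner := hint _ (hv.inner (continuous_const (y := g)))
  have hremainder := hint (fun τ => ψ τ - c - ⟪v τ, g⟫) (by fun_prop)
  simp_rw [hsplit]
  rw [intervalIntegral.integral_add (hconst.add hinner) hremainder,
    intervalIntegral.integral_add hconst hinner, intervalIntegral.integral_smul, hzero, smul_zero,
    zero_add, integral_inner_smul_eq_smul hT hmoment]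

end Dither

theorem stmt9_general (n : ℕ) (T : ℝ) (hT : 0 < T)
    (v : ℝ → En n) (hv : Continuous v)
    (hzero : (∫ τ in (0 : ℝ)..T, v τ) = 0)
    (hmoment : ∀ z : En n,
      (1 / T) • (∫ τ in (0 : ℝ)..T, (⟪v τ, z⟫ : ℝ) • v τ) = z)
    (φ : En n → ℝ) (hφ : ContDiff ℝ 1 φ)
    (L : ℝ) (hL : 0 < L) (hlip : LipschitzWith L.toNNReal (gradient φ))
    (a : ℝ) (ha : 0 < a) (uhat : En n) :
    ‖(1 / (a * T)) • (∫ τ in (0 : ℝ)..T, φ (uhat + a • v τ) • v τ) - gradient φ uhat‖ ≤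
      (a * L / (2 * T)) * ∫ τ in (0 : ℝ)..T, ‖v τ‖ ^ 3 := by
  have hsplit := integral_smul_eq_smul_add_remainder hT.ne' hv hzero hmoment
    (ψ := fun τ => φ (uhat + a • v τ)) (by have := hφ.continuous; fun_prop) (φ uhat)
    (a • gradient φ uhat)
  have hremainder := norm_integral_taylor_remainder_smul_le (hφ.differentiable one_ne_zero) hlip
    hT.le hv uhat a
  rw [Real.coe_toNNReal L hL.le] at hremainder
  calc ‖(1 / (a * T)) • (∫ τ in (0 : ℝ)..T, φ (uhat + a • v τ) • v τ) - gradient φ uhat‖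
      = 1 / (a * T) * ‖∫ τ in (0 : ℝ)..T,
          (φ (uhat + a • v τ) - φ uhat - ⟪v τ, a • gradient φ uhat⟫) • v τ‖ := by
        rw [hsplit, smul_add, smul_smul, smul_smul, add_sub_right_comm,
          show 1 / (a * T) * T * a = 1 by field_simp, one_smul, sub_self, zero_add, norm_smul,
          Real.norm_of_nonneg (by positivity)]
    _ ≤ 1 / (a * T) * (a ^ 2 * L / 2 * ∫ τ in (0 : ℝ)..T, ‖v τ‖ ^ 3) := by gcongr
    _ = (a * L / (2 * T)) * ∫ τ in (0 : ℝ)..T, ‖v τ‖ ^ 3 := by field_simp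

/-- for a continuous `T`-periodic dither `v` with zero mean and identity
second moment `(1/T)∫₀ᵀ v vᵀ = I`, and `φ` continuously differentiable with `L`-Lipschitz
gradient, the period-average of the extremum-seeking estimate satisfies
`‖(1/(aT)) ∫₀ᵀ φ(û + a v(τ)) v(τ) dτ − ∇φ(û)‖ ≤ (aL/(2T)) ∫₀ᵀ ‖v(τ)‖³ dτ`
for every `a > 0` and every `û`. -/
theorem stmt9 (n : ℕ) (hn : 1 ≤ n) (T : ℝ) (hT : 0 < T)
    (v : ℝ → En n) (hv : Continuous v) (hper : Function.Periodic v T)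
    (hzero : (∫ τ in (0 : ℝ)..T, v τ) = 0)
    (hmoment : ∀ z : En n,
      (1 / T) • (∫ τ in (0 : ℝ)..T, (⟪v τ, z⟫ : ℝ) • v τ) = z)
    (φ : En n → ℝ) (hφ : ContDiff ℝ 1 φ)
    (L : ℝ) (hL : 0 < L) (hlip : LipschitzWith L.toNNReal (gradient φ))
    (a : ℝ) (ha : 0 < a) (uhat : En n) :
    ‖(1 / (a * T)) • (∫ τ in (0 : ℝ)..T, φ (uhat + a • v τ) • v τ) - gradient φ uhat‖ ≤
      (a * L / (2 * T)) * ∫ τ in (0 : ℝ)..T, ‖v τ‖ ^ 3 :=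
  stmt9_general n T hT v hv hzero hmoment φ hφ L hL hlip a ha uhat

end
end

section
/- Assume v : ℝ → ℝⁿ is continuous and T-periodic with ∫₀ᵀ v(τ) dτ = 0 and (1/T)∫₀ᵀ v(τ)v(τ)ᵀ dτ = I, and assume φ : ℝⁿ → ℝ is continuously differentiable with L-Lipschitz gradient. Fix û, y₀ ∈ ℝⁿ and b > 0. For ε > 0, let y_ε : [0,b] → ℝⁿ be the solution of the oscillatory filter equation ẏ_ε(t) = (1/ε) φ(û + ε v(t/ε²)) v(t/ε²) − y_ε(t) with y_ε(0) = y₀, and let ȳ : [0,b] → ℝⁿ be the solution of the averaged equation ȳ′(t) = ∇φ(û) − ȳ(t) with ȳ(0) = y₀. Then there exists C > 0 (depending only on T, L, sup‖v‖, |φ(û)|, ‖∇φ(û)‖ and b) such that sup_{t∈[0,b]} ‖y_ε(t) − ȳ(t)‖ ≤ C ε for all ε ∈ (0,1]. -/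
/-!
The difference `w = yε - ybar` solves `w' = h - w`, `w 0 = 0`, with forcing
`h s = (1/ε) φ(û + ε v(s/ε²)) v(s/ε²) - ∇φ(û)`, so `exp t • w t = ∫₀ᵗ exp s • h s`.
Expanding `φ` to first order at `û` splits `h` into a Taylor remainder of size `O(ε)` and the
fast oscillations `(φ(û)/ε) v(s/ε²)` and `g(s/ε²)` with `g θ = ⟪∇φ(û), v θ⟫ v θ - ∇φ(û)`.
By the dither conditions `v` and `g` are periodic with mean zero, so their primitives are bounded,
and integrating by parts against `exp s` gains a factor `ε²`, which beats the `1/ε`.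
-/

open scoped RealInnerProductSpace

noncomputable section

open scoped NNReal
open Real Set intervalIntegral

theorem abs_sub_sub_inner_gradient_le_s10 {F : Type*} [NormedAddCommGroup F] [InnerProductSpace ℝ F]
    [CompleteSpace F] {f : F → ℝ} {K : ℝ≥0} (hf : Differentiable ℝ f)
    (hlip : LipschitzWith K (gradient f)) (u x : F) :
    |f (u + x) - f u - ⟪gradient f u, x⟫| ≤ K * ‖x‖ ^ 2 := by
  have hbound : ∀ y ∈ Metric.closedBall u ‖x‖, ‖fderiv ℝ f y - fderiv ℝ f u‖ ≤ K * ‖x‖ := by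
    intro y hy
    rw [← toDual_gradient, ← toDual_gradient, ← map_sub, LinearIsometryEquiv.norm_map]
    exact (hlip.norm_sub_le y u).trans (by gcongr; simpa [dist_eq_norm] using hy)
  have := (convex_closedBall u ‖x‖).norm_image_sub_le_of_norm_fderiv_le' (y := u + x)
    (fun y _ => hf y) hbound (Metric.mem_closedBall_self (norm_nonneg x)) (by simp)
  simpa [← inner_gradient_left, sq, mul_assoc] using this

section

variable {E : Type*} [NormedAddCommGroup E] [NormedSpace ℝ E]

theorem Function.Periodic.exists_norm_primitive_le {g : ℝ → E} {T : ℝ}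
    (hper : Function.Periodic g T) (hT : T ≠ 0) (hg : Continuous g)
    (hzero : ∫ τ in (0 : ℝ)..T, g τ = 0) :
    ∃ K ≥ (0 : ℝ), ∀ θ, ‖∫ τ in (0 : ℝ)..θ, g τ‖ ≤ K := by
  have hprim : Function.Periodic (fun θ => ∫ τ in (0 : ℝ)..θ, g τ) T := fun θ => by
    simpa [hzero] using hper.intervalIntegral_add_eq_add 0 θ hg.intervalIntegrable
  obtain ⟨K, hK⟩ := (hprim.isBounded_of_continuous hT
    (continuous_primitive hg.intervalIntegrable 0)).exists_norm_le
  exact ⟨K, (norm_nonneg _).trans (hK _ ⟨0, rfl⟩), fun θ => hK _ ⟨θ, rfl⟩⟩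

theorem norm_integral_exp_smul_le {f : ℝ → E} {B t : ℝ} (ht : 0 ≤ t)
    (hB : ∀ s ∈ Icc 0 t, ‖f s‖ ≤ B) : ‖∫ s in (0 : ℝ)..t, exp s • f s‖ ≤ B * exp t := by
  have hB0 : 0 ≤ B := (norm_nonneg _).trans (hB 0 ⟨le_rfl, ht⟩)
  calc ‖∫ s in (0 : ℝ)..t, exp s • f s‖ ≤ ∫ s in (0 : ℝ)..t, B * exp s := by
        refine norm_integral_le_of_norm_le ht (Filter.Eventually.of_forall fun s hs => ?_)
          (Continuous.intervalIntegrable (by fun_prop) _ _)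
        rw [norm_smul, norm_of_nonneg (exp_pos s).le, mul_comm]
        exact mul_le_mul_of_nonneg_right (hB s (Ioc_subset_Icc_self hs)) (exp_pos s).le
    _ = B * (exp t - 1) := by simp
    _ ≤ B * exp t := by nlinarith

variable [CompleteSpace E]

theorem norm_integral_exp_smul_comp_div_le {g : ℝ → E} {K c t : ℝ} (hg : Continuous g)
    (hK : ∀ θ, ‖∫ τ in (0 : ℝ)..θ, g τ‖ ≤ K) (hc : 0 < c) (ht : 0 ≤ t) :
    ‖∫ s in (0 : ℝ)..t, exp s • g (s / c)‖ ≤ 2 * K * c * exp t := by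
  set G : ℝ → E := fun s => c • ∫ τ in (0 : ℝ)..s / c, g τ
  have hGd : ∀ s, HasDerivAt G (g (s / c)) s := fun s => by
    have := ((integral_hasDerivAt_right (hg.intervalIntegrable 0 _)
      (hg.stronglyMeasurableAtFilter _ _) hg.continuousAt).scomp s
      ((hasDerivAt_id s).div_const c)).const_smul c
    convert this using 1
    · rfl
    · simp [smul_smul, hc.ne']
  have hGb : ∀ s, ‖G s‖ ≤ K * c := fun s => by
    rw [norm_smul, norm_of_nonneg hc.le, mul_comm]
    exact mul_le_mul_of_nonneg_right (hK _) hc.le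
  rw [integral_smul_deriv_eq_deriv_smul (fun s _ => hasDerivAt_exp s) (fun s _ => hGd s)
    (continuous_exp.intervalIntegrable _ _)
    ((hg.comp (continuous_id.div_const c)).intervalIntegrable _ _)]
  calc ‖exp t • G t - exp 0 • G 0 - ∫ s in (0 : ℝ)..t, exp s • G s‖
      ≤ ‖exp t • G t‖ + ‖∫ s in (0 : ℝ)..t, exp s • G s‖ := by
        simpa [G] using norm_sub_le _ _
    _ ≤ K * c * exp t + K * c * exp t := by
        gcongr
        · rw [norm_smul, norm_of_nonneg (exp_pos t).le, mul_comm]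
          exact mul_le_mul_of_nonneg_right (hGb t) (exp_pos t).le
        · exact norm_integral_exp_smul_le ht fun s _ => hGb s
    _ = 2 * K * c * exp t := by ring

theorem exp_smul_eq_integral_of_hasDerivWithinAt_sub {w h : ℝ → E} {b t : ℝ}
    (hh : Continuous h) (hw0 : w 0 = 0)
    (hw : ∀ s ∈ Icc 0 b, HasDerivWithinAt w (h s - w s) (Icc 0 b) s) (ht : t ∈ Icc 0 b) :
    exp t • w t = ∫ s in (0 : ℝ)..t, exp s • h s := by
  have hd : ∀ s ∈ Icc 0 b, HasDerivWithinAt (fun s => exp s • w s) (exp s • h s) (Icc 0 b) s :=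
    fun s hs => ((hasDerivAt_exp s).hasDerivWithinAt.smul (hw s hs)).congr_deriv
      (by rw [smul_sub]; abel)
  rw [integral_eq_sub_of_hasDeriv_right_of_le ht.1
    (fun s hs => (hd s ⟨hs.1, hs.2.trans ht.2⟩).continuousWithinAt.mono
      (Icc_subset_Icc le_rfl ht.2))
    (fun s hs => ((hd s ⟨hs.1.le, hs.2.le.trans ht.2⟩).hasDerivAt
      (Icc_mem_nhds hs.1 (hs.2.trans_le ht.2))).hasDerivWithinAt)
    (Continuous.intervalIntegrable (by fun_prop) _ _)]
  simp [hw0]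

theorem norm_le_of_hasDerivWithinAt_sub {w h : ℝ → E} {b B t : ℝ} (hh : Continuous h)
    (hw0 : w 0 = 0) (hw : ∀ s ∈ Icc 0 b, HasDerivWithinAt w (h s - w s) (Icc 0 b) s)
    (ht : t ∈ Icc 0 b) (hB : ‖∫ s in (0 : ℝ)..t, exp s • h s‖ ≤ B * exp t) : ‖w t‖ ≤ B := by
  rw [← exp_smul_eq_integral_of_hasDerivWithinAt_sub hh hw0 hw ht, norm_smul,
    norm_of_nonneg (exp_pos t).le, mul_comm] at hB
  exact le_of_mul_le_mul_right hB (exp_pos t)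

end

section

variable {F : Type*} [NormedAddCommGroup F] [InnerProductSpace ℝ F]

theorem integral_inner_smul_sub_eq_zero [CompleteSpace F] {v : ℝ → F} {T : ℝ} (hT : T ≠ 0)
    (hv : Continuous v) (hmoment : ∀ z : F, (1 / T) • ∫ τ in (0 : ℝ)..T, ⟪v τ, z⟫ • v τ = z)
    (D : F) : ∫ τ in (0 : ℝ)..T, (⟪D, v τ⟫ • v τ - D) = 0 := by
  have hD : ∫ τ in (0 : ℝ)..T, ⟪D, v τ⟫ • v τ = T • D := by
    simp_rw [real_inner_comm _ D]
    rw [← hmoment D, smul_smul, mul_one_div_cancel hT, one_smul, hmoment]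
  rw [integral_sub (Continuous.intervalIntegrable (by fun_prop) _ _) intervalIntegrable_const,
    hD, integral_const]
  simp

theorem smul_sub_eq_remainder_add (f : F → ℝ) (u D x : F) {ε : ℝ} (hε : ε ≠ 0) :
    ((1 / ε) * f (u + ε • x)) • x - D =
      ((f (u + ε • x) - f u - ⟪D, ε • x⟫) / ε) • x + (f u / ε) • x + (⟪D, x⟫ • x - D) := by
  rw [real_inner_smul_right]
  have : (1 / ε) * f (u + ε • x) = (f (u + ε • x) - f u - ε * ⟪D, x⟫) / ε + f u / ε + ⟪D, x⟫ := by
    field_simp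
    ring
  rw [this]
  module

theorem norm_remainder_smul_le [CompleteSpace F] {f : F → ℝ} {K : ℝ≥0} (hf : Differentiable ℝ f)
    (hlip : LipschitzWith K (gradient f)) (u : F) {x : F} {ε M : ℝ} (hε : 0 < ε)
    (hx : ‖x‖ ≤ M) :
    ‖((f (u + ε • x) - f u - ⟪gradient f u, ε • x⟫) / ε) • x‖ ≤ K * M ^ 3 * ε := by
  have := abs_sub_sub_inner_gradient_le_s10 hf hlip u (ε • x)
  rw [norm_smul, norm_of_nonneg hε.le] at this
  rw [norm_smul, Real.norm_eq_abs, abs_div, abs_of_pos hε, div_mul_eq_mul_div, div_le_iff₀ hε]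
  calc _ ≤ K * (ε * ‖x‖) ^ 2 * ‖x‖ := by gcongr
    _ = K * ‖x‖ ^ 3 * ε * ε := by ring
    _ ≤ K * M ^ 3 * ε * ε := by gcongr

theorem norm_integral_exp_smul_forcing_le [CompleteSpace F] {f : F → ℝ} {K : ℝ≥0}
    (hf : Differentiable ℝ f) (hlip : LipschitzWith K (gradient f)) (u : F) {v : ℝ → F}
    (hv : Continuous v) {M K₁ K₂ ε t : ℝ} (hM : ∀ θ, ‖v θ‖ ≤ M)
    (hK₁ : ∀ θ, ‖∫ τ in (0 : ℝ)..θ, v τ‖ ≤ K₁)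
    (hK₂ : ∀ θ, ‖∫ τ in (0 : ℝ)..θ, (⟪gradient f u, v τ⟫ • v τ - gradient f u)‖ ≤ K₂)
    (hε : 0 < ε) (hε1 : ε ≤ 1) (ht : 0 ≤ t) :
    ‖∫ s in (0 : ℝ)..t, exp s • (((1 / ε) * f (u + ε • v (s / ε ^ 2))) • v (s / ε ^ 2)
        - gradient f u)‖ ≤ (K * M ^ 3 + 2 * |f u| * K₁ + 2 * K₂) * ε * exp t := by
  set D := gradient f u
  have hc : 0 < ε ^ 2 := by positivity
  have hK₂0 : 0 ≤ K₂ := (norm_nonneg _).trans (hK₂ 0)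
  have hfc : Continuous f := hf.continuous
  simp_rw [smul_sub_eq_remainder_add f u D _ hε.ne', smul_add]
  rw [integral_add (Continuous.intervalIntegrable (by fun_prop) _ _)
      (Continuous.intervalIntegrable (by fun_prop) _ _),
    integral_add (Continuous.intervalIntegrable (by fun_prop) _ _)
      (Continuous.intervalIntegrable (by fun_prop) _ _)]
  simp_rw [smul_comm (exp _) (f u / ε)]
  rw [integral_smul]
  have hR := norm_integral_exp_smul_le ht fun s _ => norm_remainder_smul_le hf hlip u
    (x := v (s / ε ^ 2)) hε (hM _)
  have hB := norm_integral_exp_smul_comp_div_le hv hK₁ hc ht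
  have hG := norm_integral_exp_smul_comp_div_le
    (g := fun τ => ⟪D, v τ⟫ • v τ - D) (by fun_prop) hK₂ hc ht
  calc _ ≤ K * M ^ 3 * ε * exp t + |f u / ε| * (2 * K₁ * ε ^ 2 * exp t)
        + 2 * K₂ * ε ^ 2 * exp t := by
        refine (norm_add_le _ _).trans (add_le_add ((norm_add_le _ _).trans
          (add_le_add hR ?_)) hG)
        rw [norm_smul, Real.norm_eq_abs]
        exact mul_le_mul_of_nonneg_left hB (abs_nonneg _)
    _ ≤ K * M ^ 3 * ε * exp t + |f u| * (2 * K₁ * ε * exp t) + 2 * K₂ * ε * exp t := by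
        have hB' : |f u / ε| * (2 * K₁ * ε ^ 2 * exp t) = |f u| * (2 * K₁ * ε * exp t) := by
          rw [abs_div, abs_of_pos hε]
          field_simp
        have hcε : ε ^ 2 ≤ ε := by nlinarith
        rw [hB']
        gcongr
    _ = _ := by ring

end

theorem stmt10_general (n : ℕ) (T : ℝ) (hT : 0 < T)
    (v : ℝ → En n) (hv : Continuous v) (hper : Function.Periodic v T)
    (hzero : (∫ τ in (0 : ℝ)..T, v τ) = 0)
    (hmoment : ∀ z : En n,
      (1 / T) • (∫ τ in (0 : ℝ)..T, (⟪v τ, z⟫ : ℝ) • v τ) = z)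
    (φ : En n → ℝ) (hφ : ContDiff ℝ 1 φ)
    (L : ℝ) (hlip : LipschitzWith L.toNNReal (gradient φ))
    (uhat y₀ : En n) (b : ℝ) :
    ∃ C > (0 : ℝ), ∀ ε : ℝ, 0 < ε → ε ≤ 1 →
      ∀ yε : ℝ → En n, yε 0 = y₀ →
        (∀ t ∈ Set.Icc (0 : ℝ) b,
          HasDerivWithinAt yε
            (((1 / ε) * φ (uhat + ε • v (t / ε ^ 2))) • v (t / ε ^ 2) - yε t)
            (Set.Icc (0 : ℝ) b) t) →
      ∀ ybar : ℝ → En n, ybar 0 = y₀ →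
        (∀ t ∈ Set.Icc (0 : ℝ) b,
          HasDerivWithinAt ybar (gradient φ uhat - ybar t) (Set.Icc (0 : ℝ) b) t) →
      ∀ t ∈ Set.Icc (0 : ℝ) b, ‖yε t - ybar t‖ ≤ C * ε := by
  have hφd : Differentiable ℝ φ := hφ.differentiable one_ne_zero
  have hφc : Continuous φ := hφ.continuous
  obtain ⟨M, hM⟩ := (hper.isBounded_of_continuous hT.ne' hv).exists_norm_le
  have hM0 : 0 ≤ M := (norm_nonneg _).trans (hM _ ⟨0, rfl⟩)
  obtain ⟨K₁, hK₁0, hK₁⟩ := hper.exists_norm_primitive_le hT.ne' hv hzero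
  obtain ⟨K₂, hK₂0, hK₂⟩ := Function.Periodic.exists_norm_primitive_le
    (g := fun τ => ⟪gradient φ uhat, v τ⟫ • v τ - gradient φ uhat)
    (fun τ => by simp only [hper τ]) hT.ne' (by fun_prop)
    (integral_inner_smul_sub_eq_zero hT.ne' hv hmoment _)
  refine ⟨L.toNNReal * M ^ 3 + 2 * |φ uhat| * K₁ + 2 * K₂ + 1, by positivity, ?_⟩
  intro ε hε hε1 yε hyε0 hyε ybar hybar0 hybar t ht
  have hw := norm_le_of_hasDerivWithinAt_sub (w := yε - ybar) (by fun_prop)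
    (by simp [hyε0, hybar0])
    (fun s hs => ((hyε s hs).sub (hybar s hs)).congr_deriv (by simp only [Pi.sub_apply]; abel))
    ht (norm_integral_exp_smul_forcing_le hφd hlip uhat hv (fun θ => hM _ ⟨θ, rfl⟩) hK₁ hK₂
      hε hε1 ht.1)
  exact hw.trans (by nlinarith)

/-- closeness of the oscillatory filter to its average. If `y_ε` solves
`ẏ_ε(t) = (1/ε) φ(û + ε v(t/ε²)) v(t/ε²) − y_ε(t)` on `[0,b]` with `y_ε(0) = y₀`, and
`ȳ` solves the averaged equation `ȳ′ = ∇φ(û) − ȳ`, `ȳ(0) = y₀`, then there exists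
`C > 0` such that `sup_{t∈[0,b]} ‖y_ε(t) − ȳ(t)‖ ≤ C ε` for all `ε ∈ (0,1]`. -/
theorem stmt10 (n : ℕ) (hn : 1 ≤ n) (T : ℝ) (hT : 0 < T)
    (v : ℝ → En n) (hv : Continuous v) (hper : Function.Periodic v T)
    (hzero : (∫ τ in (0 : ℝ)..T, v τ) = 0)
    (hmoment : ∀ z : En n,
      (1 / T) • (∫ τ in (0 : ℝ)..T, (⟪v τ, z⟫ : ℝ) • v τ) = z)
    (φ : En n → ℝ) (hφ : ContDiff ℝ 1 φ)
    (L : ℝ) (hL : 0 < L) (hlip : LipschitzWith L.toNNReal (gradient φ))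
    (uhat y₀ : En n) (b : ℝ) (hb : 0 < b) :
    ∃ C > (0 : ℝ), ∀ ε : ℝ, 0 < ε → ε ≤ 1 →
      ∀ yε : ℝ → En n, yε 0 = y₀ →
        (∀ t ∈ Set.Icc (0 : ℝ) b,
          HasDerivWithinAt yε
            (((1 / ε) * φ (uhat + ε • v (t / ε ^ 2))) • v (t / ε ^ 2) - yε t)
            (Set.Icc (0 : ℝ) b) t) →
      ∀ ybar : ℝ → En n, ybar 0 = y₀ →
        (∀ t ∈ Set.Icc (0 : ℝ) b,
          HasDerivWithinAt ybar (gradient φ uhat - ybar t) (Set.Icc (0 : ℝ) b) t) →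
      ∀ t ∈ Set.Icc (0 : ℝ) b, ‖yε t - ybar t‖ ≤ C * ε :=
  stmt10_general n T hT v hv hper hzero hmoment φ hφ L hlip uhat y₀ b

end
end

section
/- Assume v : ℝ → ℝⁿ is continuous and T-periodic with ∫₀ᵀ v(τ) dτ = 0 and (1/T)∫₀ᵀ v(τ)v(τ)ᵀ dτ = I, and assume φ : ℝⁿ → ℝ is continuously differentiable with L-Lipschitz gradient. Fix û, ŷ, y₀ ∈ ℝⁿ, k > 0 and b > 0. For ε > 0, let y_ε solve ẏ_ε(t) = (1/ε) φ(û + ε v(t/ε²)) v(t/ε²) − y_ε(t), y_ε(0) = y₀, on [0,b], and define the inter-event errors e_u(t) = −k ŷ t and e_y(t) = y_ε(t) − y₀. Then for every ρ > 0 there exist d ∈ (0,b] and ε* ∈ (0,1] (depending only on ρ, T, L, sup‖v‖, |φ(û)|, ‖∇φ(û)‖, ‖y₀‖, k, ‖ŷ‖ and b) such that for all ε ∈ (0,ε*] and all t ∈ [0,d], ‖e_u(t)‖² + ‖e_y(t)‖² < ρ; i.e., the triggering threshold ρ cannot be reached before time d, uniformly in ε. -/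
open scoped RealInnerProductSpace

noncomputable section

/-!
Let `V` be the primitive of the dither `v`. The fast-oscillating forcing `φ(û) v(t/ε²) / ε` is
the derivative of `ε φ(û) V(t/ε²)`, and since `v` has zero mean, `V` is periodic, hence bounded,
so this term is `O(ε)`. What remains, `w = y_ε − y₀ − ε φ(û) V(t/ε²)`, is driven by
`(φ(û + εv) − φ(û)) v / ε`, which is bounded uniformly in `ε ≤ 1` because `φ` is Lipschitz on a
ball around `û`; Gronwall then gives `‖w(t)‖ = O(e^t − 1)`, and both errors vanish as `t, ε → 0`.
-/

open Set Topology

variable {E : Type*} [NormedAddCommGroup E] [NormedSpace ℝ E]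

theorem Function.Periodic.periodic_primitive_of_integral_eq_zero_s11 {v : ℝ → E} {T : ℝ}
    (hper : Function.Periodic v T) (hv : Continuous v) (hzero : ∫ τ in (0 : ℝ)..T, v τ = 0) :
    Function.Periodic (fun τ => ∫ s in (0 : ℝ)..τ, v s) T := fun τ => by
  simp only [hper.intervalIntegral_add_eq_add 0 τ hv.intervalIntegrable, zero_add, hzero,
    add_zero]

theorem Function.Periodic.exists_norm_primitive_le_of_integral_eq_zero {v : ℝ → E} {T : ℝ}
    (hper : Function.Periodic v T) (hT : T ≠ 0) (hv : Continuous v)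
    (hzero : ∫ τ in (0 : ℝ)..T, v τ = 0) :
    ∃ C, ∀ τ, ‖∫ s in (0 : ℝ)..τ, v s‖ ≤ C :=
  ((hper.periodic_primitive_of_integral_eq_zero_s11 hv hzero).isBounded_of_continuous hT
    (intervalIntegral.continuous_primitive hv.intervalIntegrable 0)).exists_norm_le.imp
    fun _ hC τ => hC _ (mem_range_self τ)

theorem hasDerivAt_smul_primitive_div_sq [CompleteSpace E] {v : ℝ → E} (hv : Continuous v)
    {ε : ℝ} (hε : ε ≠ 0) (c t : ℝ) :
    HasDerivAt (fun t => (ε * c) • ∫ s in (0 : ℝ)..t / ε ^ 2, v s)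
      ((1 / ε * c) • v (t / ε ^ 2)) t := by
  have h := ((hv.integral_hasStrictDerivAt 0 _).hasDerivAt.scomp t
    ((hasDerivAt_id t).div_const (ε ^ 2))).const_smul (ε * c)
  refine h.congr_deriv ?_
  rw [smul_smul]
  congr 1
  field_simp

theorem norm_sub_le_of_hasDerivWithinAt_add_deriv_sub_self {y p q q' : ℝ → E} {A δ b : ℝ}
    (hy : ∀ t ∈ Icc 0 b, HasDerivWithinAt y (p t + q' t - y t) (Icc 0 b) t)
    (hq : ∀ t, HasDerivAt q (q' t) t) (hq0 : q 0 = 0)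
    (hp : ∀ t ∈ Icc 0 b, ‖p t‖ ≤ A) (hqδ : ∀ t, ‖q t‖ ≤ δ) :
    ∀ t ∈ Icc 0 b, ‖y t - y 0‖ ≤ (A + ‖y 0‖ + δ) * (Real.exp t - 1) + δ := by
  set w : ℝ → E := fun t => y t - y 0 - q t
  have hyc : ContinuousOn y (Icc 0 b) := fun t ht => (hy t ht).continuousWithinAt
  have hw : ContinuousOn w (Icc 0 b) :=
    (hyc.sub continuousOn_const).sub fun t _ => (hq t).continuousAt.continuousWithinAt
  have hw' : ∀ t ∈ Ico 0 b, HasDerivWithinAt w (p t - y t) (Ici t) t := fun t ht =>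
    ((((hy t (Ico_subset_Icc_self ht)).mono_of_mem_nhdsWithin
      (Icc_mem_nhdsGE_of_mem ht)).sub_const (y 0)).sub (hq t).hasDerivWithinAt).congr_deriv
      (by abel)
  have hw'_bound : ∀ t ∈ Ico 0 b, ‖p t - y t‖ ≤ 1 * ‖w t‖ + (A + ‖y 0‖ + δ) := fun t ht =>
    calc ‖p t - y t‖ = ‖p t - (w t + y 0 + q t)‖ := by simp only [w]; abel_nf
      _ ≤ ‖p t‖ + (‖w t‖ + ‖y 0‖ + ‖q t‖) :=
        (norm_sub_le _ _).trans (add_le_add_right norm_add₃_le _)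
      _ ≤ 1 * ‖w t‖ + (A + ‖y 0‖ + δ) := by
        linarith [hp t (Ico_subset_Icc_self ht), hqδ t]
  intro t ht
  have hgron := norm_le_gronwallBound_of_norm_deriv_right_le (δ := 0) hw hw' (by simp [w, hq0])
    hw'_bound t ht
  rw [gronwallBound_of_K_ne_0 one_ne_zero] at hgron
  calc ‖y t - y 0‖ = ‖w t + q t‖ := by simp only [w, sub_add_cancel]
    _ ≤ ‖w t‖ + ‖q t‖ := norm_add_le _ _
    _ ≤ (A + ‖y 0‖ + δ) * (Real.exp t - 1) + δ := by
      simp only [zero_mul, zero_add, div_one, one_mul, sub_zero] at hgron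
      linarith [hqδ t]

theorem norm_smul_slope_le_of_lipschitzOnWith {φ : E → ℝ} {u x : E} {K : NNReal} {M ε : ℝ}
    (hφ : LipschitzOnWith K φ (Metric.closedBall u M)) (hε : 0 < ε) (hε1 : ε ≤ 1)
    (hx : ‖x‖ ≤ M) :
    ‖((1 / ε) * (φ (u + ε • x) - φ u)) • x‖ ≤ K * M ^ 2 := by
  have hεx : ‖ε • x‖ = ε * ‖x‖ := by rw [norm_smul, Real.norm_of_nonneg hε.le]
  have hmem : u + ε • x ∈ Metric.closedBall u M := by
    rw [Metric.mem_closedBall, dist_self_add_left, hεx]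
    nlinarith [norm_nonneg x]
  have hlip : |φ (u + ε • x) - φ u| ≤ K * (ε * ‖x‖) := by
    simpa [Real.dist_eq, hεx] using
      hφ.dist_le_mul _ hmem _ (Metric.mem_closedBall_self ((norm_nonneg x).trans hx))
  calc ‖((1 / ε) * (φ (u + ε • x) - φ u)) • x‖
      = (1 / ε) * |φ (u + ε • x) - φ u| * ‖x‖ := by
        rw [norm_smul, Real.norm_eq_abs, abs_mul, abs_of_pos (one_div_pos.2 hε)]
    _ ≤ (1 / ε) * (K * (ε * ‖x‖)) * ‖x‖ := by gcongr
    _ = K * ‖x‖ ^ 2 := by field_simp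
    _ ≤ K * M ^ 2 := by gcongr
theorem norm_sub_le_of_hasDerivWithinAt_dithered [CompleteSpace E] {v : ℝ → E} {φ : E → ℝ}
    {u : E} {y : ℝ → E}
    {K : NNReal} {M C ε b : ℝ} (hv : Continuous v) (hM : ∀ τ, ‖v τ‖ ≤ M)
    (hC : ∀ τ, ‖∫ s in (0 : ℝ)..τ, v s‖ ≤ C) (hφ : LipschitzOnWith K φ (Metric.closedBall u M))
    (hε : 0 < ε) (hε1 : ε ≤ 1)
    (hy : ∀ t ∈ Icc 0 b, HasDerivWithinAt y
      (((1 / ε) * φ (u + ε • v (t / ε ^ 2))) • v (t / ε ^ 2) - y t) (Icc 0 b) t) :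
    ∀ t ∈ Icc 0 b, ‖y t - y 0‖ ≤
      (K * M ^ 2 + ‖y 0‖ + ε * (|φ u| * C)) * (Real.exp t - 1) + ε * (|φ u| * C) :=
  norm_sub_le_of_hasDerivWithinAt_add_deriv_sub_self
    (p := fun t => ((1 / ε) * (φ (u + ε • v (t / ε ^ 2)) - φ u)) • v (t / ε ^ 2))
    (fun t ht => (hy t ht).congr_deriv (by rw [mul_sub, sub_smul, sub_add_cancel]))
    (hasDerivAt_smul_primitive_div_sq hv hε.ne' (φ u)) (by simp)
    (fun _ _ => norm_smul_slope_le_of_lipschitzOnWith hφ hε hε1 (hM _))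
    fun t => by
      rw [norm_smul, Real.norm_eq_abs, abs_mul, abs_of_pos hε, mul_assoc]
      gcongr
      exact hC _

theorem stmt11_general (n : ℕ) (T : ℝ) (hT : 0 < T)
    (v : ℝ → En n) (hv : Continuous v) (hper : Function.Periodic v T)
    (hzero : (∫ τ in (0 : ℝ)..T, v τ) = 0)
    (φ : En n → ℝ) (hφ : ContDiff ℝ 1 φ)
    (uhat yhat y₀ : En n) (k : ℝ) (b : ℝ) (hb : 0 < b) :
    ∀ ρ > (0 : ℝ), ∃ d : ℝ, 0 < d ∧ d ≤ b ∧ ∃ εstar : ℝ, 0 < εstar ∧ εstar ≤ 1 ∧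
      ∀ ε : ℝ, 0 < ε → ε ≤ εstar →
        ∀ yε : ℝ → En n, yε 0 = y₀ →
          (∀ t ∈ Set.Icc (0 : ℝ) b,
            HasDerivWithinAt yε
              (((1 / ε) * φ (uhat + ε • v (t / ε ^ 2))) • v (t / ε ^ 2) - yε t)
              (Set.Icc (0 : ℝ) b) t) →
        ∀ t ∈ Set.Icc (0 : ℝ) d,
          ‖(-(k * t)) • yhat‖ ^ 2 + ‖yε t - y₀‖ ^ 2 < ρ := by
  intro ρ hρ
  obtain ⟨M, hM⟩ := (hper.isBounded_of_continuous hT.ne' hv).exists_norm_le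
  obtain ⟨C, hC⟩ := hper.exists_norm_primitive_le_of_integral_eq_zero hT.ne' hv hzero
  obtain ⟨K, hK⟩ := hφ.contDiffOn.exists_lipschitzOnWith one_ne_zero
    (convex_closedBall uhat M) (isCompact_closedBall uhat M)
  set P := |φ uhat| * C
  have hP : 0 ≤ P := mul_nonneg (abs_nonneg _) ((norm_nonneg _).trans (hC 0))
  set G : ℝ → ℝ := fun s => (|k| * s * ‖yhat‖) ^ 2 +
    ((K * M ^ 2 + ‖y₀‖ + s * P) * (Real.exp s - 1) + s * P) ^ 2
  have hG : ∀ᶠ s in 𝓝 0, G s < ρ :=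
    (show Continuous G by fun_prop).continuousAt.eventually_lt continuousAt_const (by simpa [G])
  obtain ⟨s, ⟨hGs, hsb, hs1⟩, hs⟩ :=
    (((hG.and ((eventually_le_nhds hb).and (eventually_le_nhds one_pos))).filter_mono
      nhdsWithin_le_nhds).and (self_mem_nhdsWithin (s := Ioi (0 : ℝ)))).exists
  refine ⟨s, hs, hsb, s, hs, hs1, fun ε hε hεs yε hy0 hderiv t ht => hGs.trans_le' ?_⟩
  have hy := norm_sub_le_of_hasDerivWithinAt_dithered hv (fun τ => hM _ (mem_range_self τ)) hC
    hK hε (hεs.trans hs1) hderiv t ⟨ht.1, ht.2.trans hsb⟩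
  rw [hy0] at hy
  have hexp : 0 ≤ Real.exp t - 1 := by linarith [Real.add_one_le_exp t, ht.1]
  rw [norm_smul, norm_neg, Real.norm_eq_abs, abs_mul, abs_of_nonneg ht.1]
  dsimp only [G]
  gcongr ?_ ^ 2 + ?_ ^ 2
  · exact mul_nonneg (mul_nonneg (abs_nonneg k) ht.1) (norm_nonneg _)
  · gcongr; exact ht.2
  · exact hy.trans (by gcongr; exacts [ht.2])

/-- uniform (in `ε`) minimum time before triggering. If `y_ε` solves the
oscillatory filter equation on `[0,b]` with `y_ε(0) = y₀`, and the inter-event errors are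
`e_u(t) = −k ŷ t`, `e_y(t) = y_ε(t) − y₀`, then for every threshold `ρ > 0` there exist
`d ∈ (0,b]` and `ε* ∈ (0,1]` such that for all `ε ∈ (0,ε*]` and all `t ∈ [0,d]`,
`‖e_u(t)‖² + ‖e_y(t)‖² < ρ`. -/
theorem stmt11 (n : ℕ) (hn : 1 ≤ n) (T : ℝ) (hT : 0 < T)
    (v : ℝ → En n) (hv : Continuous v) (hper : Function.Periodic v T)
    (hzero : (∫ τ in (0 : ℝ)..T, v τ) = 0)
    (hmoment : ∀ z : En n,
      (1 / T) • (∫ τ in (0 : ℝ)..T, (⟪v τ, z⟫ : ℝ) • v τ) = z)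
    (φ : En n → ℝ) (hφ : ContDiff ℝ 1 φ)
    (L : ℝ) (hL : 0 < L) (hlip : LipschitzWith L.toNNReal (gradient φ))
    (uhat yhat y₀ : En n) (k : ℝ) (hk : 0 < k) (b : ℝ) (hb : 0 < b) :
    ∀ ρ > (0 : ℝ), ∃ d : ℝ, 0 < d ∧ d ≤ b ∧ ∃ εstar : ℝ, 0 < εstar ∧ εstar ≤ 1 ∧
      ∀ ε : ℝ, 0 < ε → ε ≤ εstar →
        ∀ yε : ℝ → En n, yε 0 = y₀ →
          (∀ t ∈ Set.Icc (0 : ℝ) b,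
            HasDerivWithinAt yε
              (((1 / ε) * φ (uhat + ε • v (t / ε ^ 2))) • v (t / ε ^ 2) - yε t)
              (Set.Icc (0 : ℝ) b) t) →
        ∀ t ∈ Set.Icc (0 : ℝ) d,
          ‖(-(k * t)) • yhat‖ ^ 2 + ‖yε t - y₀‖ ^ 2 < ρ :=
  stmt11_general n T hT v hv hper hzero φ hφ uhat yhat y₀ k b hb

end
end
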